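/- arXiv:2504.10321 — 2 statements merged into one kernel-verified Lean document; each statement's English description precedes it below -/
import Mathlib

section
/- Let R be a commutative ring, let k ≥ 1 and ν ≥ 0 be natural numbers, and let x = (x_0,…,x_ν) and y = (y_0,…,y_ν) be families of elements of R. Let B be the k × 2(ν+k) block matrix [W(x) | W(y)] and let A be the 2(ν+k) × k block matrix with top block −H(y) and bottom block H(x). Then the matrix product B·A is the k × k zero matrix. -/
/-- The wide Toeplitz band matrix `W(x)`: the `k × (ν+k)` matrix with
`W(x)[i,j] = x (j-i)` when `i ≤ j ≤ i + ν` and `0` otherwise. -/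
def Wmat {R : Type*} [CommRing R] (k ν : ℕ) (x : Fin (ν + 1) → R) :
    Matrix (Fin k) (Fin (ν + k)) R :=
  Matrix.of fun i j =>
    if h : (i : ℕ) ≤ (j : ℕ) ∧ (j : ℕ) ≤ (i : ℕ) + ν then
      x ⟨(j : ℕ) - (i : ℕ), by omega⟩
    else 0

/-- The tall Hankel band matrix `H(x)`: the `(ν+k) × k` matrix with
`H(x)[j,i] = x (ν+k-1-j-i)` when `k-1 ≤ j+i ≤ ν+k-1` and `0` otherwise. -/
def Hmat {R : Type*} [CommRing R] (k ν : ℕ) (x : Fin (ν + 1) → R) :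
    Matrix (Fin (ν + k)) (Fin k) R :=
  Matrix.of fun j i =>
    if h : k - 1 ≤ (j : ℕ) + (i : ℕ) ∧ (j : ℕ) + (i : ℕ) ≤ ν + k - 1 then
      x ⟨ν + k - 1 - (j : ℕ) - (i : ℕ), by omega⟩
    else 0

/-! Entry `(i, i')` of `W(u) H(v)` is `∑_{i + a + b + i' = ν + k - 1} u_a v_b`, a coefficient
of the product of the polynomials `∑ u_a t^a` and `∑ v_b t^b`; it is symmetric in `u` and `v`,
so `W(x) H(y) = W(y) H(x)` and the two blocks of `B A = -W(x) H(y) + W(y) H(x)` cancel. -/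

section

variable {R : Type*} [CommRing R] {k ν : ℕ}

theorem Wmat_apply_eq_sum (u : Fin (ν + 1) → R) (i : Fin k) (j : Fin (ν + k)) :
    Wmat k ν u i j = ∑ a : Fin (ν + 1), if (j : ℕ) = i + a then u a else 0 := by
  rw [Wmat, Matrix.of_apply]
  split_ifs with h
  · rw [Finset.sum_eq_single ⟨j - i, by omega⟩
      (fun a _ ha => if_neg fun h' => ha (Fin.ext (by dsimp only; omega))) (by simp),
      if_pos (by dsimp only; omega)]
  · exact (Finset.sum_eq_zero fun a _ => if_neg (by omega)).symm

theorem Hmat_apply_eq_sum (v : Fin (ν + 1) → R) (j : Fin (ν + k)) (i : Fin k) :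
    Hmat k ν v j i = ∑ b : Fin (ν + 1), if (j : ℕ) + i + b = ν + k - 1 then v b else 0 := by
  rw [Hmat, Matrix.of_apply]
  split_ifs with h
  · rw [Finset.sum_eq_single ⟨ν + k - 1 - j - i, by omega⟩
      (fun b _ hb => if_neg fun h' => hb (Fin.ext (by dsimp only; omega))) (by simp),
      if_pos (by dsimp only; omega)]
  · exact (Finset.sum_eq_zero fun b _ => if_neg (by omega)).symm

theorem Wmat_mul_Hmat_apply (u v : Fin (ν + 1) → R) (i i' : Fin k) :
    (Wmat k ν u * Hmat k ν v) i i' =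
      ∑ a : Fin (ν + 1), ∑ b : Fin (ν + 1),
        if (i : ℕ) + a + b + i' = ν + k - 1 then u a * v b else 0 := by
  simp_rw [Matrix.mul_apply, Wmat_apply_eq_sum, Hmat_apply_eq_sum, Finset.sum_mul_sum,
    ite_zero_mul_ite_zero]
  rw [Finset.sum_comm]
  refine Finset.sum_congr rfl fun a _ => ?_
  rw [Finset.sum_comm]
  refine Finset.sum_congr rfl fun b _ => ?_
  split_ifs with h
  · rw [Finset.sum_eq_single ⟨i + a, by omega⟩
      (fun j _ hj => if_neg fun h' => hj (Fin.ext h'.1)) (by simp),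
      if_pos ⟨rfl, by dsimp only; omega⟩]
  · exact Finset.sum_eq_zero fun j _ => if_neg (by omega)

theorem Wmat_mul_Hmat_comm (u v : Fin (ν + 1) → R) :
    Wmat k ν u * Hmat k ν v = Wmat k ν v * Hmat k ν u := by
  ext i i'
  rw [Wmat_mul_Hmat_apply, Wmat_mul_Hmat_apply, Finset.sum_comm]
  refine Finset.sum_congr rfl fun b _ => Finset.sum_congr rfl fun a _ => ?_
  rw [add_right_comm (i : ℕ) b a, mul_comm]

end

theorem stmt3_general {R : Type*} [CommRing R] (k ν : ℕ)
    (x y : Fin (ν + 1) → R) :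
    Matrix.fromCols (Wmat k ν x) (Wmat k ν y) *
        Matrix.fromRows (-(Hmat k ν y)) (Hmat k ν x) = 0 := by
  rw [Matrix.fromCols_mul_fromRows, Matrix.mul_neg, Wmat_mul_Hmat_comm x y, neg_add_cancel]

/-- The matrices `B = [W(x) | W(y)]` and `A = [-H(y); H(x)]` of the monad
`0 → O(-1)^k → O^{2ν+2k} → O(1)^k` on `ℙ^{2ν+1}` satisfy `B · A = 0`. -/
theorem stmt3 {R : Type*} [CommRing R] (k ν : ℕ) (hk : 1 ≤ k)
    (x y : Fin (ν + 1) → R) :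
    Matrix.fromCols (Wmat k ν x) (Wmat k ν y) *
        Matrix.fromRows (-(Hmat k ν y)) (Hmat k ν x) = 0 :=
  stmt3_general k ν x y
end

section
/- Let R be a commutative ring, let k ≥ 1 and n ≥ 0 be natural numbers, and let u = (u_0,…,u_n) and v = (v_0,…,v_n) be families of elements of R. Let f_α be the k × 2(n+k) block matrix [H'(v) | −H'(u)] and let g_α be the 2(n+k) × k block matrix with top block T(u) and bottom block T(v). Then the product f_α·g_α is the k × k zero matrix. -/
/-- The wide Hankel band matrix `H'(u)`: the `k × (n+k)` matrix with
`H'(u)[i,j] = u (n+k-1-i-j)` when `k-1 ≤ i+j ≤ n+k-1` and `0` otherwise. -/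
def Hw {R : Type*} [CommRing R] (k n : ℕ) (u : Fin (n + 1) → R) :
    Matrix (Fin k) (Fin (n + k)) R :=
  Matrix.of fun i j =>
    if h : k - 1 ≤ (i : ℕ) + (j : ℕ) ∧ (i : ℕ) + (j : ℕ) ≤ n + k - 1 then
      u ⟨n + k - 1 - (i : ℕ) - (j : ℕ), by omega⟩
    else 0

/-- The tall Toeplitz band matrix `T(u)`: the `(n+k) × k` matrix with
`T(u)[j,i] = u (j-i)` when `i ≤ j ≤ i + n` and `0` otherwise. -/
def Tt {R : Type*} [CommRing R] (k n : ℕ) (u : Fin (n + 1) → R) :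
    Matrix (Fin (n + k)) (Fin k) R :=
  Matrix.of fun j i =>
    if h : (i : ℕ) ≤ (j : ℕ) ∧ (j : ℕ) ≤ (i : ℕ) + n then
      u ⟨(j : ℕ) - (i : ℕ), by omega⟩
    else 0


/-!
The `(i, i')` entry of `H'(a) · T(b)` is `∑ a_p b_q` over `p + q = n + k - 1 - i - i'`, a
coefficient of the polynomial product `(∑ a_p X^p) (∑ b_q X^q)`, hence symmetric in `a` and `b`.
Concretely, the reflection `j ↦ n + k - 1 - i + i' - j` of the summation index swaps the
roles of `a` and `b`; so `H'(v) T(u) = H'(u) T(v)`, which is `f_α · g_α = 0`.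
-/

section

variable {R : Type*} [CommRing R] {k n : ℕ}

theorem Hw_mul_Tt_apply_eq_zero (a b : Fin (n + 1) → R) {i i' : Fin k} {j : Fin (n + k)}
    (h : ¬((i' : ℕ) ≤ j ∧ (i : ℕ) + j ≤ n + k - 1)) : Hw k n a i j * Tt k n b j i' = 0 := by
  simp only [Hw, Tt, Matrix.of_apply]
  split_ifs <;> first | omega | simp only [mul_zero, zero_mul]

theorem Hw_mul_Tt_apply_reflect (a b : Fin (n + 1) → R) {i i' : Fin k} {j j' : Fin (n + k)}
    (h : (i : ℕ) + j + j' = n + k - 1 + i') :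
    Hw k n a i j * Tt k n b j i' = Hw k n b i j' * Tt k n a j' i' := by
  simp only [Hw, Tt, Matrix.of_apply]
  split_ifs <;> first
    | omega
    | simp only [mul_zero, zero_mul]
    | rw [mul_comm]; congr 2 <;> ext <;> simp only <;> omega

theorem Hw_mul_Tt_comm (a b : Fin (n + 1) → R) : Hw k n a * Tt k n b = Hw k n b * Tt k n a := by
  ext i i'
  set N := n + k - 1 - i + i'
  -- the reflection, extended by the identity where it leaves `Fin (n + k)`; both terms vanish there
  let σ : Fin (n + k) → Fin (n + k) := fun j =>
    if h : j ≤ N ∧ N - j < n + k then ⟨N - j, h.2⟩ else j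
  have hσ : Function.Involutive σ := by
    intro j
    simp only [σ]
    split_ifs <;> ext <;> simp only at * <;> omega
  refine Fintype.sum_equiv hσ.toPerm _ _ fun j => ?_
  simp only [Function.Involutive.coe_toPerm, σ]
  split_ifs with hj
  · exact Hw_mul_Tt_apply_reflect a b (by simp only; omega)
  · rw [Hw_mul_Tt_apply_eq_zero a b (by omega), Hw_mul_Tt_apply_eq_zero b a (by omega)]

end

theorem stmt6_general {R : Type*} [CommRing R] (k n : ℕ)
    (u v : Fin (n + 1) → R) :
    Matrix.fromCols (Hw k n v) (-(Hw k n u)) *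
        Matrix.fromRows (Tt k n u) (Tt k n v) = 0 := by
  rw [Matrix.fromCols_mul_fromRows, Matrix.neg_mul, Hw_mul_Tt_comm v u, add_neg_cancel]

/-- The α-blocks `f_α = [H'(v) | -H'(u)]` and `g_α = [T(u); T(v)]` of the maps
of the monad on `(ℙⁿ)² × (ℙᵐ)² × (ℙˡ)²` satisfy `f_α · g_α = 0`. -/
theorem stmt6 {R : Type*} [CommRing R] (k n : ℕ) (hk : 1 ≤ k)
    (u v : Fin (n + 1) → R) :
    Matrix.fromCols (Hw k n v) (-(Hw k n u)) *
        Matrix.fromRows (Tt k n u) (Tt k n v) = 0 :=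
  stmt6_general k n u v
end
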